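/- arXiv:math/0311470 — 2 statements merged into one kernel-verified Lean document; each statement's English description precedes it below -/
import Mathlib

section
/- Every positive definite real symmetric 2×2 matrix G is congruent via a matrix in GL(2,ℤ) to a matrix [[a, -c], [-c, b]] with c ≥ 0, a - c ≥ 0, and b - c ≥ 0 (equivalently, of the form [[B+C, -C], [-C, C+A]] with A, B, C ≥ 0). -/
open Matrix

private def Qf (a b e : ℝ) (x y : ℤ) : ℝ := a*(x:ℝ)^2 + 2*e*x*y + b*y^2

private lemma q_pos' {a b e : ℝ} (ha : 0 < a) (hD : 0 < a*b - e^2)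
    {x y : ℤ} (hxy : x ≠ 0 ∨ y ≠ 0) : 0 < Qf a b e x y := by
  have : (x:ℝ) ≠ 0 ∨ (y:ℝ) ≠ 0 := by
    rcases hxy with h | h
    · exact Or.inl (Int.cast_ne_zero.mpr h)
    · exact Or.inr (Int.cast_ne_zero.mpr h)
  rcases this with h | h
  · rcases eq_or_ne (y:ℝ) 0 with hy | hy
    · have : 0 < (x:ℝ)^2 := by positivity
      simp only [Qf, hy]
      nlinarith
    · have h1 : 0 < (a*b - e^2) * (y:ℝ)^2 := by positivity
      simp only [Qf]
      nlinarith [sq_nonneg (a*x + e*y)]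
  · have h1 : 0 < (a*b - e^2) * (y:ℝ)^2 := by positivity
    simp only [Qf]
    nlinarith [sq_nonneg (a*x + e*y)]

private lemma conj_entries (a b e : ℝ) (p q r s : ℤ) :
    (!![(p:ℝ), r; q, s])ᵀ * !![a, e; e, b] * !![(p:ℝ), r; q, s] =
      !![a*p^2 + 2*e*p*q + b*q^2, a*p*r + e*(p*s + q*r) + b*q*s;
         a*p*r + e*(p*s + q*r) + b*q*s, a*r^2 + 2*e*r*s + b*s^2] := by
  ext i j
  fin_cases i <;> fin_cases j <;>
    simp [Matrix.mul_apply, Fin.sum_univ_two, Matrix.vecHead, Matrix.vecTail] <;> ring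


private lemma map_fin_two (p q r s : ℤ) :
    (!![p, r; q, s] : Matrix (Fin 2) (Fin 2) ℤ).map (Int.cast : ℤ → ℝ) = !![(p:ℝ), r; q, s] := by
  ext i j
  fin_cases i <;> fin_cases j <;> simp


private lemma finite_sublevel {a b e : ℝ} (ha : 0 < a) (hb : 0 < b) (hD : 0 < a*b - e^2) (M : ℝ) :
    {v : ℤ × ℤ | a*v.1^2 + 2*e*v.1*v.2 + b*v.2^2 ≤ M}.Finite := by
  obtain ⟨N, hN1, hN⟩ : ∃ N : ℤ, (1:ℝ) ≤ N ∧ max (a*M) (b*M) / (a*b - e^2) ≤ N := by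
    obtain ⟨n, hn⟩ := exists_nat_ge (max 1 (max (a*M) (b*M) / (a*b - e^2)))
    exact ⟨n, le_trans (le_max_left _ _) hn, le_trans (le_max_right _ _) hn⟩
  apply Set.Finite.subset (Set.finite_Icc (-N, -N) (N, N))
  rintro ⟨x, y⟩ hv
  simp only [Set.mem_setOf_eq] at hv
  have hN0 : (0:ℝ) < N := lt_of_lt_of_le one_pos hN1
  have hxb : b*M / (a*b-e^2) ≤ (N:ℝ) := le_trans ((div_le_div_iff_of_pos_right hD).mpr (le_max_right _ _)) hN
  have hyb : a*M / (a*b-e^2) ≤ (N:ℝ) := le_trans ((div_le_div_iff_of_pos_right hD).mpr (le_max_left _ _)) hN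
  have hx2 : (x:ℝ)^2 ≤ (N:ℝ)^2 := by
    have h1 : (a*b - e^2) * x^2 ≤ b*M := by nlinarith [sq_nonneg (b*y + e*x)]
    have h2 : (x:ℝ)^2 ≤ b*M / (a*b-e^2) := by rw [le_div_iff₀ hD]; linarith
    nlinarith
  have hy2 : (y:ℝ)^2 ≤ (N:ℝ)^2 := by
    have h1 : (a*b - e^2) * y^2 ≤ a*M := by nlinarith [sq_nonneg (a*x + e*y)]
    have h2 : (y:ℝ)^2 ≤ a*M / (a*b-e^2) := by rw [le_div_iff₀ hD]; linarith
    nlinarith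
  have c1 : -N ≤ x := by
    by_contra h
    push_neg at h
    have hc : (x:ℝ) < -N := by exact_mod_cast h
    nlinarith
  have c2 : x ≤ N := by
    by_contra h
    push_neg at h
    have hc : (N:ℝ) < x := by exact_mod_cast h
    nlinarith
  have c3 : -N ≤ y := by
    by_contra h
    push_neg at h
    have hc : (y:ℝ) < -N := by exact_mod_cast h
    nlinarith
  have c4 : y ≤ N := by
    by_contra h
    push_neg at h
    have hc : (N:ℝ) < y := by exact_mod_cast h
    nlinarith
  exact ⟨⟨c1, c3⟩, ⟨c2, c4⟩⟩

theorem stmt_1 (G : Matrix (Fin 2) (Fin 2) ℝ) (hsymm : G.IsSymm) (hpos : G.PosDef) :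
    ∃ U : Matrix (Fin 2) (Fin 2) ℤ, IsUnit U.det ∧
      ∃ a b c : ℝ, 0 ≤ c ∧ 0 ≤ a - c ∧ 0 ≤ b - c ∧
        (U.map (Int.cast : ℤ → ℝ)).transpose * G * U.map (Int.cast : ℤ → ℝ) =
          !![a, -c; -c, b] := by
  have ha : 0 < G 0 0 := by
    have := hpos.dotProduct_mulVec_pos (x := fun i => if i = 0 then 1 else 0) (by intro h; simpa using congr_fun h 0)
    simpa [Matrix.mulVec, dotProduct, Fin.sum_univ_two] using this
  have hb : 0 < G 1 1 := by
    have := hpos.dotProduct_mulVec_pos (x := fun i => if i = 1 then 1 else 0) (by intro h; simpa using congr_fun h 1)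
    simpa [Matrix.mulVec, dotProduct, Fin.sum_univ_two] using this
  have hGe : G 1 0 = G 0 1 := by
    have := congr_fun (congr_fun hsymm 0) 1
    simpa using this
  set a := G 0 0 with ha_def
  set e := G 0 1 with he_def
  set b := G 1 1 with hb_def
  have hD : 0 < a*b - e^2 := by
    have hd := hpos.det_pos
    rw [Matrix.det_fin_two, hGe] at hd
    nlinarith [hd]
  have hG : G = !![a, e; e, b] := by
    have h := Matrix.eta_fin_two G
    rwa [hGe] at h
  -- minimal vector
  set S : Set (ℤ × ℤ) := {v | (v.1 ≠ 0 ∨ v.2 ≠ 0) ∧ Qf a b e v.1 v.2 ≤ Qf a b e 1 0} with hS_def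
  have hSfin : S.Finite := by
    apply (finite_sublevel ha hb hD (Qf a b e 1 0)).subset
    rintro ⟨x, y⟩ hv
    exact hv.2
  have hSne : S.Nonempty := ⟨(1, 0), Or.inl one_ne_zero, le_refl _⟩
  obtain ⟨⟨p, q⟩, hpqS, hmin0⟩ := Set.exists_min_image S (fun v => Qf a b e v.1 v.2) hSfin hSne
  have hpq0 : p ≠ 0 ∨ q ≠ 0 := hpqS.1
  have hmin : ∀ x y : ℤ, (x ≠ 0 ∨ y ≠ 0) → Qf a b e p q ≤ Qf a b e x y := by
    intro x y h
    by_cases hxy : Qf a b e x y ≤ Qf a b e 1 0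
    · exact hmin0 (x, y) ⟨h, hxy⟩
    · exact le_trans hpqS.2 (le_of_not_ge hxy)
  have hm : 0 < Qf a b e p q := q_pos' ha hD hpq0
  -- gcd p q = 1
  have hg1 : (Int.gcd p q : ℤ) = 1 := by
    set g : ℤ := (Int.gcd p q : ℤ) with hg_def
    have hg0 : 0 < g := by rw [hg_def]; exact_mod_cast Int.gcd_pos_iff.mpr hpq0
    have hdp : g ∣ p := Int.gcd_dvd_left p q
    have hdq : g ∣ q := Int.gcd_dvd_right p q
    have hp' : g * (p / g) = p := Int.mul_ediv_cancel' hdp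
    have hq' : g * (q / g) = q := Int.mul_ediv_cancel' hdq
    have hpq0' : p / g ≠ 0 ∨ q / g ≠ 0 := by
      rcases hpq0 with h | h
      · left; intro h0; rw [← hp', h0, mul_zero] at h; exact h rfl
      · right; intro h0; rw [← hq', h0, mul_zero] at h; exact h rfl
    have hscale : Qf a b e p q = (g:ℝ)^2 * Qf a b e (p / g) (q / g) := by
      conv_lhs => rw [← hp', ← hq']
      simp only [Qf]
      push_cast
      ring
    have hle := hmin (p / g) (q / g) hpq0'
    have hpos' : 0 < Qf a b e (p / g) (q / g) := q_pos' ha hD hpq0'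
    have hg2 : (g:ℝ)^2 ≤ 1 := by nlinarith
    have hg2' : g^2 ≤ 1 := by exact_mod_cast hg2
    nlinarith
  -- Bezout
  have hbez : p * Int.gcdA p q + q * Int.gcdB p q = 1 := by
    rw [← Int.gcd_eq_gcd_ab, hg1]
  set s0 : ℤ := Int.gcdA p q with hs0_def
  set r0 : ℤ := -Int.gcdB p q with hr0_def
  have hdet0 : p * s0 - q * r0 = 1 := by rw [hr0_def]; linarith
  set m : ℝ := Qf a b e p q with hm_def
  set e1 : ℝ := a*(p:ℝ)*(r0:ℝ) + e*((p:ℝ)*(s0:ℝ) + (q:ℝ)*(r0:ℝ)) + b*(q:ℝ)*(s0:ℝ) with he1_def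
  set k : ℤ := round (e1 / m) with hk_def
  set d : ℝ := e1 - (k:ℝ) * m with hd_def
  have habs : |d| ≤ m / 2 := by
    have h1 : d = m * (e1 / m - (round (e1/m) : ℝ)) := by
      rw [hd_def, hk_def]
      field_simp
    rw [h1, abs_mul, abs_of_pos hm]
    calc m * |e1/m - (round (e1/m):ℝ)| ≤ m * (1/2) :=
          mul_le_mul_of_nonneg_left (abs_sub_round (e1/m)) (le_of_lt hm)
      _ = m / 2 := by ring
  set ε : ℤ := if d ≤ 0 then 1 else -1 with hε_def
  set r : ℤ := ε * (r0 - k * p) with hr_def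
  set s : ℤ := ε * (s0 - k * q) with hs_def
  have hεd : (ε:ℝ) * d = -|d| := by
    by_cases hd0 : d ≤ 0
    · rw [hε_def]
      rw [if_pos hd0, abs_of_nonpos hd0]
      push_cast
      ring
    · rw [hε_def]
      rw [if_neg hd0, abs_of_pos (lt_of_not_ge hd0)]
      push_cast
      ring
  have hε1 : ε = 1 ∨ ε = -1 := by
    rw [hε_def]
    split
    · exact Or.inl rfl
    · exact Or.inr rfl
  have hdetU : (!![p, r; q, s] : Matrix (Fin 2) (Fin 2) ℤ).det = ε := by
    rw [Matrix.det_fin_two_of, hr_def, hs_def]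
    linear_combination ε * hdet0
  have hrs0 : r ≠ 0 ∨ s ≠ 0 := by
    by_contra h
    push_neg at h
    have h0 : (0:ℤ) = ε := by
      rw [← hdetU, h.1, h.2, Matrix.det_fin_two_of]
      ring
    rcases hε1 with h1 | h1 <;> omega
  have hb' : m ≤ Qf a b e r s := hmin r s hrs0
  have h01 : a*(p:ℝ)*(r:ℝ) + e*((p:ℝ)*(s:ℝ) + (q:ℝ)*(r:ℝ)) + b*(q:ℝ)*(s:ℝ) = (ε:ℝ)*d := by
    rw [hr_def, hs_def, hd_def, he1_def, hm_def]
    simp only [Qf]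
    push_cast
    ring
  refine ⟨!![p, r; q, s], by rw [hdetU]; exact Int.isUnit_iff.mpr hε1,
    m, Qf a b e r s, |d|, abs_nonneg d, by linarith, by linarith, ?_⟩
  rw [hG, map_fin_two, conj_entries]
  have e00 : a*(p:ℝ)^2 + 2*e*p*q + b*q^2 = m := by rw [hm_def]; simp [Qf]
  have e11 : a*(r:ℝ)^2 + 2*e*r*s + b*s^2 = Qf a b e r s := by simp [Qf]
  rw [e00, e11, h01.trans hεd]
end

section
/- Let A be a real number with A < 0 and let B, C be real numbers. Then the symmetric matrices [[B+C, -C], [-C, C+A]] and [[B'+C', -C'], [-C', C'+A']] with (A', B', C') = (-A, B+2A, C+2A) are congruent over GL(2,ℤ), i.e., they represent the same lattice. -/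
open Matrix

/-- The Gram matrix of `v₁, v₂` for a superbase `v₁ + v₂ + v₃ = 0` with conorms
`A = -v₂ ⬝ v₃`, `B = -v₁ ⬝ v₃`, `C = -v₁ ⬝ v₂`. -/
def conormGram {R : Type*} [CommRing R] (A B C : R) : Matrix (Fin 2) (Fin 2) R :=
  !![B + C, -C; -C, C + A]

/-- Its columns turn the superbase `(v₁, v₂, v₃)` into `(v₃ - v₂, v₂, -v₃)`. -/
def conormStep : Matrix (Fin 2) (Fin 2) ℤ :=
  !![-1, 0; -2, 1]

theorem isUnit_det_conormStep : IsUnit conormStep.det := by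
  simp [conormStep, det_fin_two_of]

theorem conormStep_transpose_mul_conormGram_mul {R : Type*} [CommRing R] (A B C : R) :
    (conormStep.map (Int.cast : ℤ → R))ᵀ * conormGram A B C * conormStep.map (Int.cast : ℤ → R) =
      conormGram (-A) (B + 2 * A) (C + 2 * A) := by
  ext i j
  fin_cases i <;> fin_cases j <;>
    simp [conormStep, conormGram, mul_apply, Fin.sum_univ_two] <;> ring

theorem stmt_2_general (A B C : ℝ) :
    ∃ U : Matrix (Fin 2) (Fin 2) ℤ, IsUnit U.det ∧
      (U.map (Int.cast : ℤ → ℝ)).transpose * !![B + C, -C; -C, C + A] *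
          U.map (Int.cast : ℤ → ℝ) =
        !![(B + 2*A) + (C + 2*A), -(C + 2*A); -(C + 2*A), (C + 2*A) + (-A)] :=
  ⟨conormStep, isUnit_det_conormStep, conormStep_transpose_mul_conormGram_mul A B C⟩

theorem stmt_2 (A B C : ℝ) (hA : A < 0) :
    ∃ U : Matrix (Fin 2) (Fin 2) ℤ, IsUnit U.det ∧
      (U.map (Int.cast : ℤ → ℝ)).transpose * !![B + C, -C; -C, C + A] *
          U.map (Int.cast : ℤ → ℝ) =
        !![(B + 2*A) + (C + 2*A), -(C + 2*A); -(C + 2*A), (C + 2*A) + (-A)] :=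
  stmt_2_general A B C
end
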